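/- Let B be a left brace and define a*b = ab − a − b = (λ_a − id)(b) for a,b ∈ B. Define B^(1) = B and, for m ≥ 1, B^(m+1) = B^(m)*B, the subgroup of (B,+) generated by {(λ_a − id)(b) : a ∈ B^(m), b ∈ B}. Then for every m ≥ 1, B^(m) is an ideal of B: it is a normal subgroup of the multiplicative group (B,·) and λ_a(y) ∈ B^(m) for all a ∈ B and y ∈ B^(m); moreover B^(m+1) ⊆ B^(m). -/
import Mathlib


/-- A left brace: an abelian group `(A, +)` together with a group operation `(a, b) ↦ a * b`
on the same set such that `a * (b + c) + a = a * b + a * c` for all `a`, `b`, `c`. -/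
class LeftBrace (A : Type*) extends AddCommGroup A, Group A where
  mul_add_add : ∀ a b c : A, a * (b + c) + a = a * b + a * c

/-- The lambda map of a left brace: `λ a b = a * b - a`. -/
def LeftBrace.lam {A : Type*} [LeftBrace A] (a b : A) : A := a * b - a

/-- Rump's series `B = B^(1) ⊇ B^(2) ⊇ ⋯`, where `B^(m+1)` is the additive subgroup
generated by `{(λ a - id) b : a ∈ B^(m), b ∈ B}`. Here `braceSeries B m = B^(m+1)`. -/
def LeftBrace.braceSeries (B : Type*) [LeftBrace B] : ℕ → AddSubgroup B
  | 0 => ⊤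
  | m + 1 => AddSubgroup.closure
      {c : B | ∃ a ∈ LeftBrace.braceSeries B m, ∃ b : B, c = LeftBrace.lam a b - b}

namespace LeftBrace

variable {B : Type*} [LeftBrace B]

lemma one_eq_zero : (1 : B) = 0 := by
  have h := LeftBrace.mul_add_add (1 : B) 0 0
  simpa using h

lemma mul_add' (a b c : B) : a * (b + c) = a * b + a * c - a := by
  rw [← LeftBrace.mul_add_add a b c]; abel

lemma lam_add (a b c : B) : lam a (b + c) = lam a b + lam a c := by
  unfold lam; rw [mul_add']; abel

lemma lam_zero (a : B) : lam a 0 = 0 := by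
  have h := lam_add a 0 0
  rw [add_zero] at h
  exact left_eq_add.mp h

/-- `lam a` as an additive homomorphism. -/
def lamHom (a : B) : B →+ B where
  toFun := lam a
  map_zero' := lam_zero a
  map_add' := lam_add a

lemma lam_sub (a b c : B) : lam a (b - c) = lam a b - lam a c :=
  (lamHom a).map_sub b c

lemma lam_mul (a b c : B) : lam (a * b) c = lam a (lam b c) := by
  have h : lam a (lam b c) = lam a (b * c) - lam a b := by
    rw [show lam b c = b * c - b from rfl, lam_sub]
  rw [h]
  unfold lam
  rw [← mul_assoc]
  abel

lemma mul_eq_add_lam (a b : B) : a * b = a + lam a b := by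
  unfold lam; abel

lemma lam_inv_self (a : B) : lam a⁻¹ a = -a⁻¹ := by
  unfold lam
  rw [inv_mul_cancel, one_eq_zero, zero_sub]

lemma gen_mem {m : ℕ} {a : B} (ha : a ∈ braceSeries B m) (b : B) :
    lam a b - b ∈ braceSeries B (m + 1) :=
  AddSubgroup.subset_closure ⟨a, ha, b, rfl⟩

theorem key (m : ℕ) :
    (∀ c : B, ∀ y ∈ braceSeries B m, lam c y ∈ braceSeries B m) ∧
    (∀ y ∈ braceSeries B m, ∀ b : B, b * y * b⁻¹ ∈ braceSeries B m) ∧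
    braceSeries B (m + 1) ≤ braceSeries B m := by
  induction m with
  | zero => exact ⟨fun _ _ _ => trivial, fun _ _ _ => trivial, le_top⟩
  | succ m ih =>
    obtain ⟨hlam, hconj, hle⟩ := ih
    -- lambda-invariance of braceSeries B (m+1)
    have hlam' : ∀ c : B, ∀ y ∈ braceSeries B (m + 1), lam c y ∈ braceSeries B (m + 1) := by
      intro c y hy
      have hmap : braceSeries B (m + 1) ≤ (braceSeries B (m + 1)).comap (lamHom c) := by
        show AddSubgroup.closure _ ≤ _
        rw [AddSubgroup.closure_le]
        rintro x ⟨a, ha, b, rfl⟩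
        have ha' : c * a * c⁻¹ ∈ braceSeries B m := hconj a ha c
        have hca : c * a * c⁻¹ * c = c * a := by group
        have : lam c (lam a b - b) = lam (c * a * c⁻¹) (lam c b) - lam c b := by
          rw [lam_sub, ← lam_mul, ← lam_mul, hca]
        show lam c (lam a b - b) ∈ braceSeries B (m + 1)
        rw [this]
        exact gen_mem ha' (lam c b)
      exact hmap hy
    -- conjugation invariance
    have hconj' : ∀ y ∈ braceSeries B (m + 1), ∀ b : B,
        b * y * b⁻¹ ∈ braceSeries B (m + 1) := by
      intro y hy b
      have hgm : b * y * b⁻¹ ∈ braceSeries B m := hconj y (hle hy) b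
      have h1 : b * y * b⁻¹ + lam (b * y * b⁻¹) b = b + lam b y := by
        rw [← mul_eq_add_lam, ← mul_eq_add_lam]; group
      have hkey : b * y * b⁻¹ = lam b y - (lam (b * y * b⁻¹) b - b) := by
        generalize lam (b * y * b⁻¹) b = t at h1 ⊢
        rw [eq_sub_of_add_eq h1]; abel
      rw [hkey]
      exact sub_mem (hlam' b y hy) (gen_mem hgm b)
    -- decreasing
    have hle' : braceSeries B (m + 2) ≤ braceSeries B (m + 1) := by
      show AddSubgroup.closure _ ≤ _
      rw [AddSubgroup.closure_le]
      rintro x ⟨a, ha, b, rfl⟩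
      have hc : b⁻¹ * a * b ∈ braceSeries B (m + 1) := by
        have := hconj' a ha b⁻¹
        rwa [inv_inv] at this
      have hid : lam a b - b = lam b (b⁻¹ * a * b) - a := by
        have hbb : b * (b⁻¹ * a * b) = a * b := by group
        unfold lam
        rw [hbb]
        abel
      show lam a b - b ∈ braceSeries B (m + 1)
      rw [hid]
      exact sub_mem (hlam' b _ hc) ha
    exact ⟨hlam', hconj', hle'⟩

end LeftBrace

open LeftBrace in
/-- Each term `B^(m)` of Rump's series of a left brace `B` is an ideal of `B`: a
normal subgroup of the multiplicative group which is invariant under all `λ a`;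
moreover the series is decreasing: `B^(m+1) ⊆ B^(m)`. -/
theorem LeftBrace.braceSeries_ideal {B : Type*} [LeftBrace B] (m : ℕ) :
    (∃ H : Subgroup B, (H : Set B) = (braceSeries B m : Set B) ∧ H.Normal) ∧
    (∀ a : B, ∀ y ∈ braceSeries B m, lam a y ∈ braceSeries B m) ∧
    braceSeries B (m + 1) ≤ braceSeries B m := by
  obtain ⟨hlam, hconj, hle⟩ := LeftBrace.key (B := B) m
  refine ⟨⟨{ carrier := braceSeries B m
             one_mem' := by
               show (1 : B) ∈ braceSeries B m
               rw [one_eq_zero]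
               exact zero_mem _
             mul_mem' := by
               intro a b ha hb
               show a * b ∈ braceSeries B m
               rw [mul_eq_add_lam]
               exact add_mem ha (hlam a b hb)
             inv_mem' := by
               intro a ha
               show a⁻¹ ∈ braceSeries B m
               have : a⁻¹ = -(lam a⁻¹ a) := by rw [lam_inv_self, neg_neg]
               rw [this]
               exact neg_mem (hlam a⁻¹ a ha) }, rfl, ⟨fun n hn g => hconj n hn g⟩⟩,
         hlam, hle⟩
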